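/- arXiv:1011.6342 — 2 statements merged into one kernel-verified Lean document; each statement's English description precedes it below -/
import Mathlib

section
/- Let F be a pure one-dimensional coherent sheaf on X and φ: O_X(-n)^{⊕r} → F a morphism whose cokernel Q has zero-dimensional support (i.e. (O_X(-n)^{⊕r}, F, φ, ψ) is a τ'-limit-stable highly frozen triple). If ρ: F → F is a morphism with ρ ∘ φ = φ, then ρ = id_F. In particular, the automorphism group of a τ'-limit-stable highly frozen triple is trivial. -/
open CategoryTheory CategoryTheory.Limits

attribute [local instance] CategoryTheory.Abelian.hasFiniteBiproducts

universe v u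

theorem stable_highly_frozen_triple_endomorphism_is_id
    (Coh : Type u) [Category.{v} Coh] [Abelian Coh]
    (zeroDimSupport : Coh → Prop)
    (r : ℕ) (hr : 0 < r)
    (OXn : Coh)                               -- 𝒪_X(-n)
    (E F : Coh)
    (eE : E ≅ biproduct (fun _ : Fin r => OXn))   -- ψ : E ≅ 𝒪_X(-n)^{⊕r}
    -- purity of the one-dimensional sheaf F: Hom(Q, F) = 0 for zero-dimensional Q
    (hpure : ∀ Q : Coh, zeroDimSupport Q → ∀ f : Q ⟶ F, f = 0)
    (φ : E ⟶ F)
    -- τ'-limit-stability: the cokernel Q of φ has zero-dimensional support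
    (hstable : zeroDimSupport (cokernel φ))
    (ρ : F ⟶ F) (hρ : φ ≫ ρ = φ) :
    ρ = 𝟙 F := by
  have h0 : φ ≫ (ρ - 𝟙 F) = 0 := by simp [Preadditive.comp_sub, hρ]
  have hg : cokernel.desc φ (ρ - 𝟙 F) h0 = 0 := hpure _ hstable _
  have : ρ - 𝟙 F = cokernel.π φ ≫ cokernel.desc φ (ρ - 𝟙 F) h0 :=
    (cokernel.π_desc _ _ _).symm
  rw [hg, Limits.comp_zero] at this
  exact sub_eq_zero.mp this
end

section
/- Suppose the frozen triple (E,F,φ) of type (P_F,r) is τ'-stable, and let I• be the two-term complex [O_X(-n)^{⊕r} → F] in D^b(X) with O_X(-n)^{⊕r} in degree 0 and F in degree 1. Then Ext^k(I•, I•) = 0 for all k ≤ -1. -/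
/-!
Apply the long exact Hom sequences to the triangle `I• → E → F → I•[1]`, where
`E = 𝒪_X(-n)^{⊕r}`. Contravariantly, `Hom(I•, E[m])` lies between `Hom(E, E[m])` and
`Hom(F, E[m+1])`, so it vanishes for `m ≤ -1` (for `m = -1` this is purity,
`Hom(F, E) = 0`); likewise `Hom(I•, F[m]) = 0` for `m ≤ -2`. Covariantly, `Hom(I•, I•[k])`
lies between `Hom(I•, F[k-1])` and `Hom(I•, E[k])`, both zero for `k ≤ -1`.
-/

open CategoryTheory CategoryTheory.Limits CategoryTheory.Pretriangulated

universe v u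

namespace CategoryTheory

variable {C : Type u} [Category.{v} C] [HasShift C ℤ]

lemma subsingleton_shift_hom_shift_iff (X Y : C) {p q r : ℤ} (h : p + r = q) :
    Subsingleton (X⟦p⟧ ⟶ Y⟦q⟧) ↔ Subsingleton (X ⟶ Y⟦r⟧) :=
  Equiv.subsingleton_congr <| ((shiftEquiv C p).toAdjunction.homEquiv X (Y⟦q⟧)).trans
    ((Iso.refl X).homCongr ((shiftFunctorAdd' C q (-p) r (by omega)).app Y).symm)

lemma subsingleton_hom_shift_shift_iff (X Y : C) {p q r : ℤ} (h : p + q = r) :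
    Subsingleton (X ⟶ Y⟦p⟧⟦q⟧) ↔ Subsingleton (X ⟶ Y⟦r⟧) :=
  ((Iso.refl X).homCongr ((shiftFunctorAdd' C p q r h).app Y).symm).subsingleton_congr

lemma subsingleton_hom_shift_zero_iff (X Y : C) :
    Subsingleton (X ⟶ Y⟦(0 : ℤ)⟧) ↔ Subsingleton (X ⟶ Y) :=
  ((Iso.refl X).homCongr ((shiftFunctorZero C ℤ).app Y)).subsingleton_congr

namespace Pretriangulated

variable [HasZeroObject C] [Preadditive C] [∀ n : ℤ, (shiftFunctor C n).Additive]
  [Pretriangulated C] {T : Triangle C}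

lemma subsingleton_obj₂_hom (hT : T ∈ distTriang C) (Y : C)
    (h₁ : Subsingleton (T.obj₁ ⟶ Y)) (h₃ : Subsingleton (T.obj₃ ⟶ Y)) :
    Subsingleton (T.obj₂ ⟶ Y) := by
  refine subsingleton_of_forall_eq 0 fun f => ?_
  obtain ⟨g, rfl⟩ := Triangle.yoneda_exact₂ T hT f (Subsingleton.elim _ _)
  rw [Subsingleton.elim g 0, comp_zero]

lemma subsingleton_hom_obj₂ (hT : T ∈ distTriang C) (X : C)
    (h₁ : Subsingleton (X ⟶ T.obj₁)) (h₃ : Subsingleton (X ⟶ T.obj₃)) :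
    Subsingleton (X ⟶ T.obj₂) := by
  refine subsingleton_of_forall_eq 0 fun f => ?_
  obtain ⟨g, rfl⟩ := Triangle.coyoneda_exact₂ T hT f (Subsingleton.elim _ _)
  rw [Subsingleton.elim g 0, zero_comp]

lemma subsingleton_obj₁_hom_shift (hT : T ∈ distTriang C) (Y : C) (m : ℤ)
    (h₂ : Subsingleton (T.obj₂ ⟶ Y⟦m⟧)) (h₃ : Subsingleton (T.obj₃ ⟶ Y⟦m + 1⟧)) :
    Subsingleton (T.obj₁ ⟶ Y⟦m⟧) :=
  subsingleton_obj₂_hom (inv_rot_of_distTriang T hT) _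
    ((subsingleton_shift_hom_shift_iff _ _ (by omega)).2 h₃) h₂

lemma subsingleton_hom_shift_obj₁ (hT : T ∈ distTriang C) (X : C) (k : ℤ)
    (h₂ : Subsingleton (X ⟶ T.obj₂⟦k⟧)) (h₃ : Subsingleton (X ⟶ T.obj₃⟦k - 1⟧)) :
    Subsingleton (X ⟶ T.obj₁⟦k⟧) :=
  subsingleton_hom_obj₂ (inv_rot_of_distTriang _ (Triangle.shift_distinguished T hT k)) X
    ((subsingleton_hom_shift_shift_iff _ _ (by dsimp; omega)).2 h₃) h₂

end Pretriangulated

end CategoryTheory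

theorem negative_ext_of_stable_frozen_triple_vanish
    (D : Type u) [Category.{v} D] [HasZeroObject D] [Preadditive D] [HasShift D ℤ]
    [∀ n : ℤ, (shiftFunctor D n).Additive] [Pretriangulated D]
    (r : ℕ) (hr : 0 < r)
    (Er Fobj Kobj Qobj Icx : D)   -- 𝒪_X(-n)^{⊕r}, F, K = ker φ, Q = coker φ, I•
    -- the exact triangle I• → 𝒪_X(-n)^{⊕r} → F → I•[1]:
    (a : Icx ⟶ Er) (b : Er ⟶ Fobj) (c : Fobj ⟶ (shiftFunctor D (1 : ℤ)).obj Icx)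
    (hT : Triangle.mk a b c ∈ distTriang D)
    -- the exact triangle K → I• → Q[-1] → K[1]:
    (k1 : Kobj ⟶ Icx) (k2 : Icx ⟶ (shiftFunctor D (-1 : ℤ)).obj Qobj)
    (k3 : (shiftFunctor D (-1 : ℤ)).obj Qobj ⟶ (shiftFunctor D (1 : ℤ)).obj Kobj)
    (hT2 : Triangle.mk k1 k2 k3 ∈ distTriang D)
    -- negative Ext's between the sheaves vanish (degree reasons):
    (hEE : ∀ k : ℤ, k < 0 → ∀ f : Er ⟶ (shiftFunctor D k).obj Er, f = 0)
    (hEF : ∀ k : ℤ, k < 0 → ∀ f : Er ⟶ (shiftFunctor D k).obj Fobj, f = 0)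
    (hFEneg : ∀ k : ℤ, k < 0 → ∀ f : Fobj ⟶ (shiftFunctor D k).obj Er, f = 0)
    (hFF : ∀ k : ℤ, k < 0 → ∀ f : Fobj ⟶ (shiftFunctor D k).obj Fobj, f = 0)
    (hKF : ∀ k : ℤ, k < 0 → ∀ f : Kobj ⟶ (shiftFunctor D k).obj Fobj, f = 0)
    -- purity of 𝒪_X(-n)^{⊕r}: Hom(F, 𝒪_X(-n)^{⊕r}) = 0
    (hFE : ∀ f : Fobj ⟶ Er, f = 0)
    -- τ'-stability (Q zero-dimensional) and purity of F: Hom(Q, F) = 0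
    (hQF : ∀ f : Qobj ⟶ Fobj, f = 0) :
    ∀ k : ℤ, k ≤ -1 → ∀ f : Icx ⟶ (shiftFunctor D k).obj Icx, f = 0 := by
  have hFE_nonpos : ∀ m : ℤ, m ≤ 0 → Subsingleton (Fobj ⟶ Er⟦m⟧) := by
    intro m hm
    obtain hm | rfl := hm.lt_or_eq
    · exact subsingleton_of_forall_eq 0 (hFEneg m hm)
    · exact (subsingleton_hom_shift_zero_iff _ _).2 (subsingleton_of_forall_eq 0 hFE)
  have hIE : ∀ m : ℤ, m ≤ -1 → Subsingleton (Icx ⟶ Er⟦m⟧) := fun m hm =>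
    subsingleton_obj₁_hom_shift hT Er m (subsingleton_of_forall_eq 0 (hEE m (by omega)))
      (hFE_nonpos (m + 1) (by omega))
  have hIF : ∀ m : ℤ, m ≤ -2 → Subsingleton (Icx ⟶ Fobj⟦m⟧) := fun m hm =>
    subsingleton_obj₁_hom_shift hT Fobj m (subsingleton_of_forall_eq 0 (hEF m (by omega)))
      (subsingleton_of_forall_eq 0 (hFF (m + 1) (by omega)))
  intro k hk f
  have : Subsingleton (Icx ⟶ Icx⟦k⟧) :=
    subsingleton_hom_shift_obj₁ hT Icx k (hIE k hk) (hIF (k - 1) (by omega))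
  exact Subsingleton.elim f 0
end
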